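/- arXiv:2006.12053 — 4 statements merged into one kernel-verified Lean document; each statement's English description precedes it below -/
import Mathlib

section
/- In the fluid model with early birds and T ≤ Δ/μ, the socially optimal arrival profile — uniform density μ/Δ on [0,T] plus an atom of mass 1 − μT/Δ at T — yields social cost (μβ/2)T² + (Δ − μT)·(βT + ((Δ − μT)/(2μ))·(α+β)). Moreover, this cost is strictly less than the equilibrium social cost Δ(Δ(α+β) − αμT)/μ whenever 0 < T and μT < Δ. -/
/-- Fluid model with early birds and `T ≤ Δ/μ`: the socially optimal profile
(uniform density `μ/Δ` on `[0,T]` plus atom `1 − μT/Δ` at `T`) has social cost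
`(μβ/2)T² + (Δ−μT)(βT + ((Δ−μT)/(2μ))(α+β))`, which is strictly smaller than
the equilibrium social cost `Δ(Δ(α+β) − αμT)/μ` whenever `0 < T` and `μT < Δ`. -/
theorem fluid_early_birds_optimal_social_cost (Δ μ α β T : ℝ)
    (hΔ : 0 < Δ) (hμ : 0 < μ) (hα : 0 < α) (hβ : 0 < β)
    (hT : 0 < T) (hTd : μ * T < Δ) :
    ((∫ t in (0:ℝ)..T, β * t * μ)
        + ∫ x in (0:ℝ)..(Δ - μ * T), (α * x / μ + β * (T + x / μ)))
      = μ * β / 2 * T ^ 2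
        + (Δ - μ * T) * (β * T + (Δ - μ * T) / (2 * μ) * (α + β)) ∧
    μ * β / 2 * T ^ 2 + (Δ - μ * T) * (β * T + (Δ - μ * T) / (2 * μ) * (α + β))
      < Δ * (Δ * (α + β) - α * μ * T) / μ := by
  have hμ' : μ ≠ 0 := ne_of_gt hμ
  constructor
  · have h1 : (∫ t in (0:ℝ)..T, β * t * μ) = β * μ * T ^ 2 / 2 := by
      have : (fun t : ℝ => β * t * μ) = (fun t : ℝ => β * μ * t) := by
        funext t; ring
      rw [this, intervalIntegral.integral_const_mul, integral_id]
      ring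
    have h2 : (∫ x in (0:ℝ)..(Δ - μ * T), (α * x / μ + β * (T + x / μ)))
        = (α + β) / μ * (Δ - μ * T) ^ 2 / 2 + β * T * (Δ - μ * T) := by
      have : (fun x : ℝ => α * x / μ + β * (T + x / μ))
          = (fun x : ℝ => (α + β) / μ * x + β * T) := by
        funext x; field_simp; ring
      rw [this, intervalIntegral.integral_add
          ((by continuity : Continuous fun x:ℝ => (α+β)/μ*x).intervalIntegrable _ _)
          intervalIntegrable_const,
        intervalIntegral.integral_const_mul, integral_id,
        intervalIntegral.integral_const, smul_eq_mul]
      ring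
    rw [h1, h2]
    field_simp
    ring
  · rw [lt_div_iff₀ hμ]
    have key : (μ * β / 2 * T ^ 2 + (Δ - μ * T) * (β * T + (Δ - μ * T) / (2 * μ) * (α + β))) * μ
        = (μ^2*β*T^2 + 2*μ*(Δ-μ*T)*β*T + (Δ-μ*T)^2*(α+β))/2 := by
      field_simp; ring
    rw [key, div_lt_iff₀ (by norm_num : (0:ℝ) < 2)]
    nlinarith [mul_pos hα (mul_pos (by linarith : (0:ℝ) < Δ - μ*T) (by nlinarith : (0:ℝ) < Δ + μ*T)), mul_pos hβ (mul_pos hΔ hΔ), sq_nonneg (Δ - μ*T)]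
end

section
/- In the fluid model with early birds and T ≤ Δ/μ, the price of anarchy PoA(α) (as defined by the ratio of equilibrium to optimal social cost) is monotonically increasing in α on (0, ∞) when 0 < μT < Δ and β > 0. -/
/-! Numerator and denominator are affine in `α`, and a ratio `(a α + b) / (c α + d)` with positive
denominator is strictly increasing as soon as `a d - b c > 0`. Here, with `D = Δ - μT`, one has
`a = ΔD/μ`, `b = Δ²β/μ`, `c = D²/(2μ)`, `d = μβT²/2 + DβT + D²β/(2μ)`, and the determinant
simplifies to `a d - b c = Δ² D β T / (2μ)`. -/

theorem strictMonoOn_affine_div_affine {𝕜 : Type*} [Field 𝕜] [LinearOrder 𝕜]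
    [IsStrictOrderedRing 𝕜] {a b c d : 𝕜} {s : Set 𝕜} (hpos : ∀ x ∈ s, 0 < c * x + d)
    (hdet : b * c < a * d) :
    StrictMonoOn (fun x => (a * x + b) / (c * x + d)) s := by
  intro x hx y hy hxy
  rw [div_lt_div_iff₀ (hpos x hx) (hpos y hy)]
  have : 0 < (y - x) * (a * d - b * c) := mul_pos (sub_pos.2 hxy) (sub_pos.2 hdet)
  linarith

/-- Fluid model with early birds and `0 < μT < Δ`, `β > 0`: the price of
anarchy is strictly increasing in the waiting cost `α` on `(0, ∞)`. -/
theorem fluid_PoA_monotone (Δ μ β T : ℝ)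
    (hΔ : 0 < Δ) (hμ : 0 < μ) (hβ : 0 < β) (hT : 0 < T) (hTd : μ * T < Δ) :
    StrictMonoOn
      (fun α : ℝ => (Δ * (Δ * (α + β) - α * μ * T) / μ) /
        (μ * β / 2 * T ^ 2
          + (Δ - μ * T) * (β * T + (Δ - μ * T) / (2 * μ) * (α + β))))
      (Set.Ioi (0 : ℝ)) := by
  have hD : 0 < Δ - μ * T := sub_pos.2 hTd
  have h_det : Δ ^ 2 * β / μ * ((Δ - μ * T) ^ 2 / (2 * μ))
      < Δ * (Δ - μ * T) / μ
        * (μ * β / 2 * T ^ 2 + (Δ - μ * T) * β * T + (Δ - μ * T) ^ 2 * β / (2 * μ)) := by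
    rw [← sub_pos]
    convert_to 0 < Δ ^ 2 * (Δ - μ * T) * β * T / (2 * μ)
    · field_simp
      ring
    · positivity
  have h_affine : ∀ α : ℝ,
      Δ * (Δ * (α + β) - α * μ * T) / μ = Δ * (Δ - μ * T) / μ * α + Δ ^ 2 * β / μ ∧
      μ * β / 2 * T ^ 2 + (Δ - μ * T) * (β * T + (Δ - μ * T) / (2 * μ) * (α + β))
        = (Δ - μ * T) ^ 2 / (2 * μ) * α
          + (μ * β / 2 * T ^ 2 + (Δ - μ * T) * β * T + (Δ - μ * T) ^ 2 * β / (2 * μ)) :=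
    fun α => ⟨by ring, by ring⟩
  simp only [h_affine]
  exact strictMonoOn_affine_div_affine (fun x (hx : 0 < x) => by positivity) h_det
end

section
/- In the fluid model with early birds and no effective deadline (T > Δ/μ), the equilibrium arrival distribution is uniform with density (μ/Δ)·(α/(α+β)) on the interval [−Δβ/(μα), Δ/μ]: this density integrates to 1 over that interval, and under this profile the cost of arriving at any t in the interval equals Δβ/μ, so the equilibrium social cost equals Δ²β/μ. -/
/-!
Under the uniform profile a drop arriving at `t` starts service at
`s(t) = α/(α+β) · (t + Δβ/(μα))`. Its cost `α (s - t) + β s = (α+β) s - α t` is then constant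
in `t`, because `s` grows at exactly the rate `α/(α+β)` that balances waiting against
tardiness; the first drop (`s = 0`) and the last one (no waiting) both pay `Δβ/μ`.
-/

section
variable {Δ μ α β : ℝ}

lemma uniform_density_mul_support_length (hΔ : Δ ≠ 0) (hμ : μ ≠ 0) (hα : α ≠ 0)
    (hαβ : α + β ≠ 0) :
    μ / Δ * (α / (α + β)) * (Δ / μ + Δ * β / (μ * α)) = 1 := by
  field_simp

lemma service_start_of_uniform (t : ℝ) (hΔ : Δ ≠ 0) (hμ : μ ≠ 0) :
    Δ * (μ / Δ * (α / (α + β)) * (t + Δ * β / (μ * α))) / μ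
      = α / (α + β) * (t + Δ * β / (μ * α)) := by
  field_simp

lemma arrival_cost_of_uniform (t : ℝ) (hμ : μ ≠ 0) (hα : α ≠ 0) (hαβ : α + β ≠ 0) :
    (α + β) * (α / (α + β) * (t + Δ * β / (μ * α))) - α * t = Δ * β / μ := by
  field_simp
  ring

end

/-- Fluid model with early birds and no effective deadline (`T > Δ/μ`):
the uniform density `(μ/Δ)·(α/(α+β))` on `[−Δβ/(μα), Δ/μ]` has total mass one,
the cost of arriving at any point of the support equals `Δβ/μ`, and hence the
equilibrium social cost equals `Δ²β/μ`. -/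
theorem fluid_no_deadline_equilibrium (Δ μ α β : ℝ)
    (hΔ : 0 < Δ) (hμ : 0 < μ) (hα : 0 < α) (hβ : 0 < β) :
    (μ / Δ * (α / (α + β))) * (Δ / μ + Δ * β / (μ * α)) = 1 ∧
    (∀ t ∈ Set.Icc (-(Δ * β / (μ * α))) (Δ / μ),
      α * (Δ * ((μ / Δ * (α / (α + β))) * (t + Δ * β / (μ * α))) / μ - t)
        + β * (Δ * ((μ / Δ * (α / (α + β))) * (t + Δ * β / (μ * α))) / μ)
        = Δ * β / μ) ∧
    Δ * (Δ * β / μ) = Δ ^ 2 * β / μ := by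
  have hαβ : α + β ≠ 0 := by positivity
  refine ⟨uniform_density_mul_support_length hΔ.ne' hμ.ne' hα.ne' hαβ, fun t _ => ?_, by ring⟩
  rw [service_start_of_uniform t hΔ.ne' hμ.ne', ← arrival_cost_of_uniform t hμ.ne' hα.ne' hαβ]
  ring
end

section
/- In the fluid model with early birds and T > Δ/μ, the socially optimal profile of a uniform density μ/Δ on [0, Δ/μ] yields social cost Δ²β/(2μ), and hence the price of anarchy equals exactly 2. -/
/-! Under the uniform profile the arrival rate equals the service rate, so no drop waits and a drop
arriving at `t` pays only its tardiness `β t`. Averaging `β t` over `[0, Δ/μ]` gives half of the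
equilibrium cost `Δ²β/μ`. -/

theorem integral_const_mul_id_mul (β r a : ℝ) :
    ∫ t in (0:ℝ)..a, β * t * r = β * r * a ^ 2 / 2 := by
  simp only [mul_comm β, mul_assoc, intervalIntegral.integral_mul_const, integral_id]
  ring

theorem uniform_profile_socialCost (Δ μ β : ℝ) :
    Δ * ∫ t in (0:ℝ)..(Δ / μ), β * t * (μ / Δ) = Δ ^ 2 * β / (2 * μ) := by
  rw [integral_const_mul_id_mul]
  rcases eq_or_ne Δ 0 with rfl | hΔ
  · simp
  rcases eq_or_ne μ 0 with rfl | hμ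
  · simp
  field_simp

theorem div_div_div_two_mul {K : Type*} [Field K] {a b : K} (hab : a / b ≠ 0) :
    a / b / (a / (2 * b)) = 2 := by
  rw [mul_comm, ← div_div, div_div_cancel₀ hab]

theorem fluid_no_deadline_optimal_and_PoA_general (Δ μ β : ℝ)
    (hΔ : 0 < Δ) (hμ : 0 < μ) (hβ : 0 < β) :
    Δ * ∫ t in (0:ℝ)..(Δ / μ), β * t * (μ / Δ) = Δ ^ 2 * β / (2 * μ) ∧
    (Δ ^ 2 * β / μ) / (Δ ^ 2 * β / (2 * μ)) = 2 :=
  ⟨uniform_profile_socialCost Δ μ β, div_div_div_two_mul (by positivity)⟩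

/-- Fluid model with early birds and `T > Δ/μ`: the socially optimal uniform
profile `μ/Δ` on `[0, Δ/μ]` yields social cost `Δ²β/(2μ)`, and the price of
anarchy (equilibrium cost `Δ²β/μ` over optimal cost) equals exactly `2`. -/
theorem fluid_no_deadline_optimal_and_PoA (Δ μ α β : ℝ)
    (hΔ : 0 < Δ) (hμ : 0 < μ) (hα : 0 < α) (hβ : 0 < β) :
    Δ * ∫ t in (0:ℝ)..(Δ / μ), β * t * (μ / Δ) = Δ ^ 2 * β / (2 * μ) ∧
    (Δ ^ 2 * β / μ) / (Δ ^ 2 * β / (2 * μ)) = 2 :=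
  fluid_no_deadline_optimal_and_PoA_general Δ μ β hΔ hμ hβ
end
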